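/- arXiv:2308.00089 — 7 statements merged into one kernel-verified Lean document; each statement's English description precedes it below -/
import Mathlib

section
/- For any positive integer m and any integer k with 1 ≤ k < m, the k-th power sums of the two sets {cos(2πa/m) : a = 0, 1, ..., m-1} and {cos(2π(a+1/2)/m) : a = 0, 1, ..., m-1} are equal; that is, ∑_{a=0}^{m-1} cos(2πa/m)^k = ∑_{a=0}^{m-1} cos(2π(a+1/2)/m)^k. -/
/-!
Write `cos θ = (e^{iθ} + e^{-iθ}) / 2` and expand `cos θ ^ k` by the binomial theorem: only the
frequencies `2j - k` with `|2j - k| ≤ k < m` occur. Summing `e^{in(2π(a + c)/m)}` over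
`a < m` is a full geometric sum of the `m`-th root of unity `e^{2πin/m}`, which vanishes unless
`n = 0`. Hence `∑ₐ cos (2π(a + c)/m) ^ k` is `m / 2^k` times the central binomial coefficient,
whatever the shift `c`, in particular for `c = 0` and `c = 1/2`.
-/

open Real Finset

theorem IsPrimitiveRoot.sum_range_zpow_pow_eq_zero {K : Type*} [Field K] {ζ : K} {m : ℕ}
    (hζ : IsPrimitiveRoot ζ m) {n : ℤ} (hn : ¬ (m : ℤ) ∣ n) :
    ∑ a ∈ range m, (ζ ^ n) ^ a = 0 := by
  have hne : ζ ^ n ≠ 1 := fun h => hn ((hζ.zpow_eq_one_iff_dvd n).mp h)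
  have hpow : (ζ ^ n) ^ m = 1 := by
    rw [← zpow_natCast, ← zpow_mul, mul_comm, zpow_mul, zpow_natCast, hζ.pow_eq_one, one_zpow]
  rw [geom_sum_eq hne, hpow, sub_self, zero_div]

namespace Complex

theorem cos_pow_eq_sum_exp (x : ℂ) (k : ℕ) :
    cos x ^ k = (∑ j ∈ range (k + 1), k.choose j * exp ((2 * j - k : ℤ) * x * I)) / 2 ^ k := by
  rw [cos, div_pow, add_pow]
  congr 1
  refine sum_congr rfl fun j hj => ?_
  have hjk : j ≤ k := Nat.lt_succ_iff.mp (mem_range.mp hj)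
  rw [← exp_nat_mul, ← exp_nat_mul, ← exp_add, Nat.cast_sub hjk]
  push_cast
  ring_nf

theorem sum_range_exp_int_mul {m : ℕ} {n : ℤ} (hnm : n.natAbs < m) (c : ℂ) :
    ∑ a ∈ range m, exp (n * (2 * π * (a + c) / m) * I) = if n = 0 then (m : ℂ) else 0 := by
  split_ifs with hn
  · simp [hn]
  have hdvd : ¬ (m : ℤ) ∣ n := fun h =>
    hn (Int.eq_zero_of_dvd_of_natAbs_lt_natAbs h (by simpa using hnm))
  have hsplit : ∀ a : ℕ, exp (n * (2 * π * (a + c) / m) * I) =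
      (exp (2 * π * I / m) ^ n) ^ a * exp (n * (2 * π * c / m) * I) := by
    intro a
    rw [← exp_int_mul, ← exp_nat_mul, ← exp_add]
    ring_nf
  simp only [hsplit, ← sum_mul,
    (isPrimitiveRoot_exp m (by omega)).sum_range_zpow_pow_eq_zero hdvd, zero_mul]

theorem sum_range_cos_pow {m k : ℕ} (hkm : k < m) (c : ℂ) :
    ∑ a ∈ range m, cos (2 * π * (a + c) / m) ^ k =
      m * (∑ j ∈ range (k + 1) with 2 * j = k, (k.choose j : ℂ)) / 2 ^ k := by
  simp only [cos_pow_eq_sum_exp, ← sum_div]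
  rw [sum_comm, sum_filter, mul_sum]
  congr 1
  refine sum_congr rfl fun j hj => ?_
  have hjk : j ≤ k := Nat.lt_succ_iff.mp (mem_range.mp hj)
  have hfreq : (2 * j - k : ℤ) = 0 ↔ 2 * j = k := by omega
  rw [← mul_sum, sum_range_exp_int_mul (by omega), if_congr hfreq rfl rfl]
  split_ifs <;> ring

end Complex

theorem chebyshev_power_sums_match_general (m : ℕ) (k : ℕ) (hkm : k < m) :
    ∑ a ∈ Finset.range m, (Real.cos (2 * Real.pi * a / m)) ^ k =
      ∑ a ∈ Finset.range m, (Real.cos (2 * Real.pi * ((a : ℝ) + 1/2) / m)) ^ k := by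
  have h₀ := Complex.sum_range_cos_pow hkm 0
  simp only [add_zero] at h₀
  rw [← Complex.ofReal_inj]
  push_cast
  rw [h₀, Complex.sum_range_cos_pow hkm]

theorem chebyshev_power_sums_match (m : ℕ) (hm : 0 < m) (k : ℕ) (hk1 : 1 ≤ k) (hkm : k < m) :
    ∑ a ∈ Finset.range m, (Real.cos (2 * Real.pi * a / m)) ^ k =
      ∑ a ∈ Finset.range m, (Real.cos (2 * Real.pi * ((a : ℝ) + 1/2) / m)) ^ k :=
  chebyshev_power_sums_match_general m k hkm
end

section
/- For all nonnegative integers t and all integers h ≥ 1, the unsigned Stirling number of the first kind satisfies c(t, t-h) = ∑_{f=h+1}^{2h} (t)_f · c_{f,h}, where (t)_f = t(t-1)···(t-f+1) is the falling factorial and c_{f,h} = T_{f,f-h}/f! with T_{f,f-h} the number of permutations of f elements with no fixed points having exactly f-h cycles; moreover 0 ≤ c_{f,h} ≤ 1. -/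
open scoped Classical

/-- The number of cycles of a permutation, counting fixed points as 1-cycles. -/
noncomputable def numCycles {n : ℕ} (σ : Equiv.Perm (Fin n)) : ℕ :=
  σ.cycleType.card + (Finset.univ.filter fun x => σ x = x).card

/-- Unsigned Stirling number of the first kind `c(n, k)`: the number of
permutations of an `n`-element set with exactly `k` cycles (with `k : ℤ`, so
that it vanishes for negative `k`). -/
noncomputable def stirlingFirst (n : ℕ) (k : ℤ) : ℕ :=
  (Finset.univ.filter fun σ : Equiv.Perm (Fin n) => (numCycles σ : ℤ) = k).card

/-- `T_{f,j}`: the number of permutations of `f` elements with no fixed points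
and exactly `j` cycles. -/
noncomputable def derangementCycles (f j : ℕ) : ℕ :=
  (Finset.univ.filter fun σ : Equiv.Perm (Fin f) =>
    (∀ x, σ x ≠ x) ∧ numCycles σ = j).card

lemma fixedCard {n : ℕ} (σ : Equiv.Perm (Fin n)) :
    (Finset.univ.filter fun x => σ x = x).card = n - σ.support.card := by
  have : (Finset.univ.filter fun x => σ x = x) = σ.supportᶜ := by
    ext x; simp [Equiv.Perm.mem_support]
  rw [this, Finset.card_compl, Fintype.card_fin]

lemma numCycles_eq {n : ℕ} (σ : Equiv.Perm (Fin n)) :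
    numCycles σ = σ.cycleType.card + (n - σ.support.card) := by
  rw [numCycles, fixedCard]

-- roundtrip: extendDomain ∘ restrict = id
lemma roundtrip1 {t f : ℕ} {p : Fin t → Prop} [DecidablePred p]
    (e : Fin f ≃ {x : Fin t // p x}) (σ : Equiv.Perm (Fin t))
    (h1 : ∀ x, p (σ x) ↔ p x) (hout : ∀ x, ¬ p x → σ x = x) :
    ((e.permCongr.symm (σ.subtypePerm h1)).extendDomain e) = σ := by
  ext b
  by_cases hb : p b
  · rw [Equiv.Perm.extendDomain_apply_subtype _ _ hb]
    simp [Equiv.permCongr_apply, Equiv.Perm.subtypePerm_apply]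
  · rw [Equiv.Perm.extendDomain_apply_not_subtype _ _ hb]
    simp [hout b hb]

lemma derangement_supp {f : ℕ} (τ : Equiv.Perm (Fin f)) (hd : ∀ x, τ x ≠ x) :
    τ.support = Finset.univ := by
  ext x; simp [Equiv.Perm.mem_support, hd x]

lemma cardA (t f j : ℕ) (S : Finset (Fin t)) (hS : S.card = f) :
    (Finset.univ.filter fun σ : Equiv.Perm (Fin t) =>
        σ.support = S ∧ σ.cycleType.card = j).card
      = (Finset.univ.filter fun τ : Equiv.Perm (Fin f) =>
        (∀ x, τ x ≠ x) ∧ numCycles τ = j).card := by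
  have ecard : Fintype.card {x : Fin t // x ∈ S} = f := by simp [hS]
  let e : Fin f ≃ {x : Fin t // x ∈ S} := (Fintype.equivFinOfCardEq ecard).symm
  have hmapuniv : ∀ (τ : Equiv.Perm (Fin f)), (∀ x, τ x ≠ x) →
      (τ.extendDomain e).support = S := by
    intro τ hd
    rw [Equiv.Perm.support_extend_domain, derangement_supp τ hd]
    ext x
    simp only [Finset.mem_map, Finset.mem_univ, true_and]
    constructor
    · rintro ⟨a, rfl⟩
      exact (e a).2
    · intro hx
      exact ⟨e.symm ⟨x, hx⟩, by simp [Equiv.asEmbedding]⟩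
  have hiff : ∀ (σ : Equiv.Perm (Fin t)), σ.support = S →
      ∀ x, σ x ∈ S ↔ x ∈ S := by
    intro σ hσ x
    rw [← hσ, Equiv.Perm.apply_mem_support]
  have hout : ∀ (σ : Equiv.Perm (Fin t)), σ.support = S →
      ∀ x, ¬ x ∈ S → σ x = x := by
    intro σ hsupp x hx
    by_contra hne
    exact hx (hsupp ▸ Equiv.Perm.mem_support.mpr hne)
  apply Finset.card_bij'
    (i := fun σ hσ => e.permCongr.symm (σ.subtypePerm
      (hiff σ (Finset.mem_filter.mp hσ).2.1)))
    (j := fun τ _ => τ.extendDomain e)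
  case hi =>
    intro σ hσ
    have hm := (Finset.mem_filter.mp hσ).2
    obtain ⟨hsupp, hct⟩ := hm
    have hrt := roundtrip1 e σ (hiff σ hsupp) (hout σ hsupp)
    have hd : ∀ x, (e.permCongr.symm (σ.subtypePerm (hiff σ hsupp))) x ≠ x := by
      intro x hx
      have h2 : σ (e x) = (e x : Fin t) := by
        have := congrArg (fun y => ((e y : {x : Fin t // x ∈ S}) : Fin t)) hx
        simpa [Equiv.permCongr_apply, Equiv.Perm.subtypePerm_apply] using this
      have hmem : ((e x : {x : Fin t // x ∈ S}) : Fin t) ∈ σ.support :=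
        hsupp ▸ (e x).2
      exact (Equiv.Perm.mem_support.mp hmem) h2
    have hct2 : (e.permCongr.symm (σ.subtypePerm (hiff σ hsupp))).cycleType.card = j := by
      have h3 := Equiv.Perm.cycleType_extendDomain e
        (g := e.permCongr.symm (σ.subtypePerm (hiff σ hsupp)))
      rw [hrt] at h3
      rw [← h3]
      exact hct
    refine Finset.mem_filter.mpr ⟨Finset.mem_univ _, hd, ?_⟩
    rw [numCycles]
    have hemp : (Finset.univ.filter fun x =>
        (e.permCongr.symm (σ.subtypePerm (hiff σ hsupp))) x = x) = ∅ := by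
      ext x; simp only [Finset.mem_filter, Finset.mem_univ, true_and,
        Finset.notMem_empty, iff_false]
      exact hd x
    rw [hemp, hct2]; simp
  case hj =>
    intro τ hτ
    have hm := (Finset.mem_filter.mp hτ).2
    obtain ⟨hd, hnc⟩ := hm
    refine Finset.mem_filter.mpr ⟨Finset.mem_univ _, hmapuniv τ hd, ?_⟩
    rw [Equiv.Perm.cycleType_extendDomain]
    rw [numCycles] at hnc
    have hemp : (Finset.univ.filter fun x => τ x = x) = ∅ := by
      ext x; simp [hd x]
    rw [hemp] at hnc; simpa using hnc
  case left_inv =>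
    intro σ hσ
    exact roundtrip1 e σ _ (hout σ (Finset.mem_filter.mp hσ).2.1)
  case right_inv =>
    intro τ hτ
    apply Equiv.Perm.extendDomainHom_injective e
    show Equiv.Perm.extendDomain _ e = Equiv.Perm.extendDomain τ e
    apply roundtrip1
    intro x hx
    exact Equiv.Perm.extendDomain_apply_not_subtype τ e hx

lemma supp_le {n : ℕ} (σ : Equiv.Perm (Fin n)) : σ.support.card ≤ n := by
  simpa using Finset.card_le_card (Finset.subset_univ σ.support)

lemma key_bounds {t h : ℕ} (hh : 1 ≤ h) (σ : Equiv.Perm (Fin t))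
    (hnc : numCycles σ + h = t) :
    σ.cycleType.card + h = σ.support.card ∧
    h + 1 ≤ σ.support.card ∧ σ.support.card ≤ 2 * h := by
  have hle := supp_le σ
  rw [numCycles_eq] at hnc
  have h1 : σ.cycleType.card + h = σ.support.card := by omega
  have h2 : 2 * σ.cycleType.card ≤ σ.support.card := by
    have := Multiset.card_nsmul_le_sum (s := σ.cycleType) (a := 2)
      (fun x hx => Equiv.Perm.two_le_of_mem_cycleType hx)
    rw [Equiv.Perm.sum_cycleType] at this
    simpa [smul_eq_mul, mul_comm] using this
  have h3 : 1 ≤ σ.cycleType.card := by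
    by_contra hc
    have hc0 : σ.cycleType.card = 0 := by omega
    have : σ = 1 := Equiv.Perm.card_cycleType_eq_zero.mp hc0
    rw [this] at h1
    simp at h1
    omega
  omega

lemma natMain (t h : ℕ) (hh : 1 ≤ h) :
    stirlingFirst t ((t : ℤ) - h) =
      ∑ f ∈ Finset.Icc (h + 1) (2 * h), t.choose f * derangementCycles f (f - h) := by
  rw [stirlingFirst]
  have hmem : ∀ σ : Equiv.Perm (Fin t),
      ((numCycles σ : ℤ) = (t : ℤ) - h) ↔ numCycles σ + h = t := by
    intro σ; omega
  have hA : (Finset.univ.filter fun σ : Equiv.Perm (Fin t) => (numCycles σ : ℤ) = (t:ℤ) - h)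
      = Finset.univ.filter fun σ => numCycles σ + h = t := by
    apply Finset.filter_congr; intro σ _; exact (hmem σ)
  rw [hA]
  rw [Finset.card_eq_sum_card_fiberwise
    (f := fun σ : Equiv.Perm (Fin t) => σ.support.card)
    (t := Finset.Icc (h+1) (2*h))
    (by
      intro σ hσ
      rw [Finset.mem_coe, Finset.mem_filter] at hσ
      have := key_bounds hh σ hσ.2
      rw [Finset.mem_coe, Finset.mem_Icc]
      exact ⟨this.2.1, this.2.2⟩)]
  apply Finset.sum_congr rfl
  intro f hf
  rw [Finset.mem_Icc] at hf
  have hset : (Finset.filter (fun σ => σ.support.card = f)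
        (Finset.univ.filter fun σ : Equiv.Perm (Fin t) => numCycles σ + h = t))
      = Finset.univ.filter
        (fun σ : Equiv.Perm (Fin t) => σ.support.card = f ∧ σ.cycleType.card = f - h) := by
    ext σ
    simp only [Finset.mem_filter, Finset.mem_univ, true_and]
    constructor
    · rintro ⟨hnc, hsc⟩
      have := (key_bounds hh σ hnc).1
      exact ⟨hsc, by omega⟩
    · rintro ⟨hsc, hct⟩
      refine ⟨?_, hsc⟩
      have hle := supp_le σ
      rw [numCycles_eq, hsc, hct]
      omega
  rw [hset]
  rw [Finset.card_eq_sum_card_fiberwise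
    (f := fun σ : Equiv.Perm (Fin t) => σ.support)
    (t := Finset.powersetCard f Finset.univ)
    (by
      intro σ hσ
      rw [Finset.mem_coe, Finset.mem_filter] at hσ
      exact Finset.mem_powersetCard_univ.mpr hσ.2.1)]
  have hfib : ∀ S ∈ Finset.powersetCard f Finset.univ,
      (Finset.filter (fun σ => σ.support = S)
        (Finset.univ.filter
          (fun σ : Equiv.Perm (Fin t) => σ.support.card = f ∧ σ.cycleType.card = f - h))).card
      = derangementCycles f (f - h) := by
    intro S hS
    have hScard : S.card = f := Finset.mem_powersetCard_univ.mp hS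
    have hfeq : (Finset.filter (fun σ => σ.support = S)
        (Finset.univ.filter
          (fun σ : Equiv.Perm (Fin t) => σ.support.card = f ∧ σ.cycleType.card = f - h)))
      = Finset.univ.filter (fun σ : Equiv.Perm (Fin t) =>
          σ.support = S ∧ σ.cycleType.card = f - h) := by
      ext σ
      simp only [Finset.mem_filter, Finset.mem_univ, true_and]
      constructor
      · rintro ⟨⟨-, hct⟩, hs⟩; exact ⟨hs, hct⟩
      · rintro ⟨hs, hct⟩; exact ⟨⟨by rw [hs, hScard], hct⟩, hs⟩
    rw [hfeq, cardA t f (f - h) S hScard, derangementCycles]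
  rw [Finset.sum_congr rfl hfib, Finset.sum_const, Finset.card_powersetCard,
    Finset.card_univ, Fintype.card_fin, smul_eq_mul]

theorem stirlingFirst_eq_sum_descFactorial (t h : ℕ) (hh : 1 ≤ h) :
    ((stirlingFirst t ((t : ℤ) - h)) : ℝ) =
      ∑ f ∈ Finset.Icc (h + 1) (2 * h),
        (t.descFactorial f : ℝ) * ((derangementCycles f (f - h) : ℝ) / (Nat.factorial f)) ∧
    ∀ f ∈ Finset.Icc (h + 1) (2 * h),
      0 ≤ (derangementCycles f (f - h) : ℝ) / (Nat.factorial f) ∧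
      (derangementCycles f (f - h) : ℝ) / (Nat.factorial f) ≤ 1 := by
  constructor
  · rw [natMain t h hh]
    push_cast
    apply Finset.sum_congr rfl
    intro f _
    rw [Nat.descFactorial_eq_factorial_mul_choose]
    have hf0 : (Nat.factorial f : ℝ) ≠ 0 := by positivity
    push_cast
    field_simp
  · intro f _
    have hf0 : (0 : ℝ) < (Nat.factorial f : ℝ) := by positivity
    have hle : derangementCycles f (f - h) ≤ Nat.factorial f := by
      rw [derangementCycles]
      calc (Finset.univ.filter fun σ : Equiv.Perm (Fin f) =>
            (∀ x, σ x ≠ x) ∧ numCycles σ = f - h).card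
          ≤ (Finset.univ : Finset (Equiv.Perm (Fin f))).card := Finset.card_filter_le _ _
        _ = Nat.factorial f := by
            rw [Finset.card_univ, Fintype.card_perm, Fintype.card_fin]
    constructor
    · positivity
    · rw [div_le_one hf0]
      exact_mod_cast hle
end

section
/- Let p be a probability distribution on {1,...,n} with n even, and let q be any monotone decreasing distribution on {1,...,n} (meaning q_i ≥ q_j whenever i ≤ j). Define γ_i = (p_{2i} - p_{2i-1})/2 if p_{2i-1} < p_{2i}, and γ_i = 0 otherwise, for i = 1,...,n/2. Then the total variation distance satisfies d_TV(p, q) ≥ ∑_{i=1}^{n/2} γ_i. -/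
/-!
Group the coordinates into the consecutive pairs `(2i-1, 2i)`. Within a pair, monotonicity gives
`q (2i) ≤ q (2i-1)`, so `p (2i) - p (2i-1) ≤ |p (2i-1) - q (2i-1)| + |p (2i) - q (2i)|` by the
triangle inequality; summing these pair bounds gives the claim.
-/

open Finset

theorem sum_Icc_two_mul_eq_sum_pairs {M : Type*} [AddCommMonoid M] (m : ℕ) (f : ℕ → M) :
    ∑ i ∈ Icc 1 (2 * m), f i = ∑ i ∈ Icc 1 m, (f (2 * i - 1) + f (2 * i)) := by
  induction m with
  | zero => simp
  | succ k ih =>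
    rw [show 2 * (k + 1) = 2 * k + 1 + 1 by ring, sum_Icc_succ_top (by omega),
      sum_Icc_succ_top (by omega), sum_Icc_succ_top (by omega), ih, add_assoc,
      show 2 * (k + 1) - 1 = 2 * k + 1 by omega, show 2 * (k + 1) = 2 * k + 1 + 1 by omega]

theorem sub_le_abs_sub_add_abs_sub_of_le {α : Type*} [AddCommGroup α] [LinearOrder α]
    [IsOrderedAddMonoid α] {a b x y : α} (hyx : y ≤ x) : b - a ≤ |a - x| + |b - y| :=
  calc b - a = (x - a) + (y - x) + (b - y) := by abel
    _ ≤ |a - x| + 0 + |b - y| := by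
      gcongr
      · exact abs_sub_comm a x ▸ le_abs_self (x - a)
      · exact sub_nonpos.mpr hyx
      · exact le_abs_self _
    _ = |a - x| + |b - y| := by rw [add_zero]

theorem ite_half_sub_le_half_abs_add_abs {a b x y : ℝ} (hyx : y ≤ x) :
    (if a < b then (b - a) / 2 else 0) ≤ 1 / 2 * (|a - x| + |b - y|) := by
  split_ifs
  · linarith [sub_le_abs_sub_add_abs_sub_of_le (a := a) (b := b) hyx]
  · positivity

theorem monotone_distance_pairing_general (n : ℕ) (hn : Even n)
    (p q : ℕ → ℝ)
    (hqmono : ∀ i ∈ Finset.Icc 1 n, ∀ j ∈ Finset.Icc 1 n, i ≤ j → q j ≤ q i) :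
    (1 / 2) * ∑ i ∈ Finset.Icc 1 n, |p i - q i| ≥
      ∑ i ∈ Finset.Icc 1 (n / 2),
        (if p (2 * i - 1) < p (2 * i) then (p (2 * i) - p (2 * i - 1)) / 2 else 0) := by
  obtain ⟨m, rfl⟩ := hn
  rw [← two_mul, Nat.mul_div_cancel_left m two_pos, sum_Icc_two_mul_eq_sum_pairs, mul_sum]
  refine sum_le_sum fun i hi => ite_half_sub_le_half_abs_add_abs ?_
  have hi := mem_Icc.mp hi
  exact hqmono _ (mem_Icc.mpr ⟨by omega, by omega⟩) _ (mem_Icc.mpr ⟨by omega, by omega⟩) (by omega)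

theorem monotone_distance_pairing (n : ℕ) (hn : Even n) (hn0 : 0 < n)
    (p q : ℕ → ℝ)
    (hp0 : ∀ i ∈ Finset.Icc 1 n, 0 ≤ p i) (hp1 : ∑ i ∈ Finset.Icc 1 n, p i = 1)
    (hq0 : ∀ i ∈ Finset.Icc 1 n, 0 ≤ q i) (hq1 : ∑ i ∈ Finset.Icc 1 n, q i = 1)
    (hqmono : ∀ i ∈ Finset.Icc 1 n, ∀ j ∈ Finset.Icc 1 n, i ≤ j → q j ≤ q i) :
    (1 / 2) * ∑ i ∈ Finset.Icc 1 n, |p i - q i| ≥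
      ∑ i ∈ Finset.Icc 1 (n / 2),
        (if p (2 * i - 1) < p (2 * i) then (p (2 * i) - p (2 * i - 1)) / 2 else 0) :=
  monotone_distance_pairing_general n hn p q hqmono
end

section
/- Let n be even, Q as above, and let p be obtained from Q by setting p_{2i-1} = Q_{2i-1} + δ_i and p_{2i} = Q_{2i} - δ_i where each δ_i is a real number. If at least K of the δ_i satisfy δ_i < -c for some c > 0, then p is at distance at least K·c in total variation from every monotone decreasing distribution on {1,...,n}. -/
/-! Each pair `(2i-1, 2i)` forces a monotone decreasing `q` to pay, in `ℓ¹` distance, at least the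
increment `p (2i) - p (2i-1)`: since `q (2i) ≤ q (2i-1)`, we have
`p (2i) - p (2i-1) ≤ |p (2i-1) - q (2i-1)| + |p (2i) - q (2i)|`. Summing over disjoint pairs gives
`2 · d_TV(p, q) ≥ ∑ᵢ max 0 (p (2i) - p (2i-1))`, and for the perturbed `Q` this increment is
`-2 δᵢ > 2c` at each of the at least `K` indices with `δᵢ < -c`. -/

open Finset

lemma sub_le_abs_sub_add_abs_sub {a b x y : ℝ} (hyx : y ≤ x) :
    b - a ≤ |a - x| + |b - y| := by
  have := neg_abs_le (a - x)
  have := le_abs_self (b - y)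
  linarith

lemma sum_Icc_pairs (g : ℕ → ℝ) (m : ℕ) :
    ∑ i ∈ Icc 1 m, (g (2 * i - 1) + g (2 * i)) = ∑ j ∈ Icc 1 (2 * m), g j := by
  induction m with
  | zero => simp
  | succ m ih =>
    rw [sum_Icc_succ_top (by omega), ih, show 2 * (m + 1) = 2 * m + 1 + 1 by ring,
      sum_Icc_succ_top (by omega), sum_Icc_succ_top (by omega), Nat.add_sub_cancel]
    ring

lemma sum_Icc_pairs_le {g : ℕ → ℝ} (n : ℕ) (hg : ∀ j ∈ Icc 1 n, 0 ≤ g j) :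
    ∑ i ∈ Icc 1 (n / 2), (g (2 * i - 1) + g (2 * i)) ≤ ∑ j ∈ Icc 1 n, g j := by
  rw [sum_Icc_pairs]
  exact sum_le_sum_of_subset_of_nonneg (Icc_subset_Icc_right (Nat.mul_div_le n 2))
    fun j hj _ => hg j hj

lemma sum_max_pair_increment_le_sum_abs_sub (n : ℕ) (p q : ℕ → ℝ)
    (hq : ∀ i ∈ Icc 1 n, ∀ j ∈ Icc 1 n, i ≤ j → q j ≤ q i) :
    ∑ i ∈ Icc 1 (n / 2), max 0 (p (2 * i) - p (2 * i - 1)) ≤ ∑ j ∈ Icc 1 n, |p j - q j| := by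
  refine le_trans (sum_le_sum fun i hi => ?_) (sum_Icc_pairs_le n fun j _ => abs_nonneg _)
  rw [mem_Icc] at hi
  refine max_le (by positivity) (sub_le_abs_sub_add_abs_sub ?_)
  exact hq _ (mem_Icc.2 ⟨by omega, by omega⟩) _ (mem_Icc.2 ⟨by omega, by omega⟩) (by omega)

theorem perturbed_Q_far_from_monotone_general (n : ℕ)
    (δ : ℕ → ℝ) (c : ℝ) (hc : 0 < c) (K : ℕ)
    (hK : K ≤ ((Finset.Icc 1 (n / 2)).filter fun i => δ i < -c).card)
    (p : ℕ → ℝ)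
    (hp : ∀ i ∈ Finset.Icc 1 (n / 2),
      p (2 * i - 1) = (5 / (4 * n) + 1 / (2 * (n : ℝ) ^ 2) - (i : ℝ) / (n : ℝ) ^ 2) + δ i ∧
      p (2 * i) = (5 / (4 * n) + 1 / (2 * (n : ℝ) ^ 2) - (i : ℝ) / (n : ℝ) ^ 2) - δ i) :
    ∀ q : ℕ → ℝ, (∀ i ∈ Finset.Icc 1 n, 0 ≤ q i) → (∑ i ∈ Finset.Icc 1 n, q i = 1) →
      (∀ i ∈ Finset.Icc 1 n, ∀ j ∈ Finset.Icc 1 n, i ≤ j → q j ≤ q i) →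
      (K : ℝ) * c ≤ (1 / 2) * ∑ i ∈ Finset.Icc 1 n, |p i - q i| := by
  intro q _ _ hq
  set S := (Icc 1 (n / 2)).filter fun i => δ i < -c
  have increment_large : ∀ i ∈ S, 2 * c ≤ max 0 (p (2 * i) - p (2 * i - 1)) := by
    intro i hi
    rw [mem_filter] at hi
    obtain ⟨hp₁, hp₂⟩ := hp i hi.1
    exact le_max_of_le_right (by linarith [hi.2])
  calc (K : ℝ) * c ≤ S.card * c := by gcongr
    _ = (1 / 2) * ∑ _i ∈ S, 2 * c := by rw [sum_const, nsmul_eq_mul]; ring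
    _ ≤ (1 / 2) * ∑ i ∈ S, max 0 (p (2 * i) - p (2 * i - 1)) := by
        gcongr with i hi
        exact increment_large i hi
    _ ≤ (1 / 2) * ∑ i ∈ Icc 1 (n / 2), max 0 (p (2 * i) - p (2 * i - 1)) := by
        gcongr
        exact filter_subset _ _
    _ ≤ (1 / 2) * ∑ i ∈ Icc 1 n, |p i - q i| := by
        gcongr
        exact sum_max_pair_increment_le_sum_abs_sub n p q hq

theorem perturbed_Q_far_from_monotone (n : ℕ) (hn : Even n) (hn2 : 2 ≤ n)
    (δ : ℕ → ℝ) (c : ℝ) (hc : 0 < c) (K : ℕ)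
    (hK : K ≤ ((Finset.Icc 1 (n / 2)).filter fun i => δ i < -c).card)
    (p : ℕ → ℝ)
    (hp : ∀ i ∈ Finset.Icc 1 (n / 2),
      p (2 * i - 1) = (5 / (4 * n) + 1 / (2 * (n : ℝ) ^ 2) - (i : ℝ) / (n : ℝ) ^ 2) + δ i ∧
      p (2 * i) = (5 / (4 * n) + 1 / (2 * (n : ℝ) ^ 2) - (i : ℝ) / (n : ℝ) ^ 2) - δ i) :
    ∀ q : ℕ → ℝ, (∀ i ∈ Finset.Icc 1 n, 0 ≤ q i) → (∑ i ∈ Finset.Icc 1 n, q i = 1) →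
      (∀ i ∈ Finset.Icc 1 n, ∀ j ∈ Finset.Icc 1 n, i ≤ j → q j ≤ q i) →
      (K : ℝ) * c ≤ (1 / 2) * ∑ i ∈ Finset.Icc 1 n, |p i - q i| :=
  perturbed_Q_far_from_monotone_general n δ c hc K hK p hp
end

section
/- Let p be a probability distribution on {1,...,n} (n divisible by 3) satisfying p_{3i-2} > p_{3i} > (4/5)·p_{3i-2} and p_{3i-1} > (3/4)·p_{3i} for all 1 ≤ i ≤ n/3, and let q be any log-concave distribution on {1,...,n}. Then d_TV(p, q) ≥ (1/2)·∑_{i=1}^{n/3} max(0, √(p_{3i-2}·p_{3i}) - p_{3i-1}). -/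
/-!
Write `p₁, p₂, p₃` and `q₁, q₂, q₃` for the values on a triple `(3i-2, 3i-1, 3i)`; log-concavity
gives `q₁ q₃ ≤ q₂²`. Since `∂ₓ √(xy) = √(y/x)/2 ≤ 1` while `y ≤ 4x`, as long as `q₁, q₃` are not
far below `p₁, p₃` we get
`√(p₁ p₃) ≤ √(q₁ q₃) + |p₁ - q₁| + |p₃ - q₃| ≤ |q₂| + … ≤ p₂ + |p₂ - q₂| + |p₁ - q₁| + |p₃ - q₃|`.
When `q` is far from `p`, the bound `√(p₁ p₃) ≤ p₁` and the ratio constraints on `p` suffice.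
The triples are disjoint, so these bounds add up.
-/

open Finset

lemma Real.sqrt_mul_le_sqrt_mul_add_sub {x x' y : ℝ} (hx' : 0 ≤ x') (hx'x : x' ≤ x)
    (hyx' : y ≤ 4 * x') : √(x * y) ≤ √(x' * y) + (x - x') := by
  rw [Real.sqrt_mul (hx'.trans hx'x), Real.sqrt_mul hx']
  have ha : √x' ≤ √x := Real.sqrt_le_sqrt hx'x
  have hb : √y ≤ 2 * √x' :=
    Real.sqrt_le_iff.2 ⟨by positivity, by rw [mul_pow, Real.sq_sqrt hx']; linarith⟩
  -- `√x √y - √x' √y = (√x - √x') √y ≤ (√x - √x') (√x + √x') = x - x'`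
  nlinarith [mul_nonneg (sub_nonneg.2 ha) (by linarith : 0 ≤ √x + √x' - √y),
    Real.sq_sqrt (hx'.trans hx'x), Real.sq_sqrt hx']

lemma Real.sqrt_mul_sub_le_of_mul_le_sq {a b c a' b' c' : ℝ} (hca : c < a) (hac : 4 / 5 * a < c)
    (hcb : 3 / 4 * c < b) (hlc : a' * c' ≤ b' ^ 2) :
    √(a * c) - b ≤ |a - a'| + |b - b'| + |c - c'| := by
  have hsa : a - a' ≤ |a - a'| := le_abs_self _
  have hsc : c - c' ≤ |c - c'| := le_abs_self _
  have hs0 := abs_nonneg (a - a')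
  have ht0 := abs_nonneg (c - c')
  have hsb : |b'| ≤ b + |b - b'| := by
    have := abs_sub_abs_le_abs_sub b' b
    rw [abs_sub_comm, abs_of_pos (by linarith : 0 < b)] at this
    linarith
  have hac_le : √(a * c) ≤ a := by
    calc √(a * c) ≤ √(a * a) := Real.sqrt_le_sqrt (by nlinarith)
      _ = a := Real.sqrt_mul_self (by linarith)
  by_cases hfar : 2 / 5 * a ≤ |a - a'| ∨ 1 / 2 * c ≤ |c - c'|
  · rcases hfar with hfar | hfar <;> linarith [abs_nonneg (b - b')]
  push Not at hfar
  set s := |a - a'|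
  set t := |c - c'|
  have hca' : √(a * c) ≤ √(a * (c - t)) + t := by
    have := Real.sqrt_mul_le_sqrt_mul_add_sub (x := c) (x' := c - t) (y := a)
      (by linarith) (by linarith) (by linarith)
    rw [mul_comm c, mul_comm (c - t)] at this
    linarith
  have hac' : √(a * (c - t)) ≤ √((a - s) * (c - t)) + s := by
    have := Real.sqrt_mul_le_sqrt_mul_add_sub (x := a) (x' := a - s) (y := c - t)
      (by linarith) (by linarith) (by linarith)
    linarith
  have hq : √((a - s) * (c - t)) ≤ |b'| :=
    calc √((a - s) * (c - t)) ≤ √(a' * c') :=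
          Real.sqrt_le_sqrt (mul_le_mul (by linarith) (by linarith) (by linarith) (by linarith))
      _ ≤ √(b' ^ 2) := Real.sqrt_le_sqrt hlc
      _ = |b'| := Real.sqrt_sq_eq_abs b'
  linarith

lemma Finset.sum_Icc_triples {M : Type*} [AddCommMonoid M] (f : ℕ → M) (m : ℕ) :
    ∑ i ∈ Icc 1 m, (f (3 * i - 2) + f (3 * i - 1) + f (3 * i)) = ∑ j ∈ Icc 1 (3 * m), f j := by
  induction m with
  | zero => simp
  | succ k ih =>
    rw [sum_Icc_succ_top (by omega), ih, show 3 * (k + 1) - 2 = 3 * k + 1 by omega,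
      show 3 * (k + 1) - 1 = 3 * k + 1 + 1 by omega, show 3 * (k + 1) = 3 * k + 1 + 1 + 1 by ring,
      sum_Icc_succ_top (by omega), sum_Icc_succ_top (by omega), sum_Icc_succ_top (by omega)]
    abel

theorem log_concave_distance_lower_bound_general (n : ℕ)
    (p q : ℕ → ℝ)
    (hpa : ∀ i ∈ Finset.Icc 1 (n / 3), p (3 * i) < p (3 * i - 2))
    (hpb : ∀ i ∈ Finset.Icc 1 (n / 3), (4 / 5) * p (3 * i - 2) < p (3 * i))
    (hpc : ∀ i ∈ Finset.Icc 1 (n / 3), (3 / 4) * p (3 * i) < p (3 * i - 1))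
    -- log-concavity of q
    (hqlc : ∀ i : ℕ, 2 ≤ i → i ≤ n - 1 → q (i - 1) * q (i + 1) ≤ (q i) ^ 2) :
    (1 / 2) * ∑ i ∈ Finset.Icc 1 (n / 3),
        max 0 (Real.sqrt (p (3 * i - 2) * p (3 * i)) - p (3 * i - 1)) ≤
      (1 / 2) * ∑ i ∈ Finset.Icc 1 n, |p i - q i| := by
  have htriple (i : ℕ) (hi : i ∈ Icc 1 (n / 3)) :
      max 0 (√(p (3 * i - 2) * p (3 * i)) - p (3 * i - 1)) ≤
        |p (3 * i - 2) - q (3 * i - 2)| + |p (3 * i - 1) - q (3 * i - 1)| +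
          |p (3 * i) - q (3 * i)| := by
    have hi' := mem_Icc.1 hi
    have hlc := hqlc (3 * i - 1) (by omega) (by omega)
    rw [show 3 * i - 1 - 1 = 3 * i - 2 by omega, show 3 * i - 1 + 1 = 3 * i by omega] at hlc
    exact max_le (by positivity)
      (Real.sqrt_mul_sub_le_of_mul_le_sq (hpa i hi) (hpb i hi) (hpc i hi) hlc)
  calc (1 / 2) * ∑ i ∈ Icc 1 (n / 3), max 0 (√(p (3 * i - 2) * p (3 * i)) - p (3 * i - 1))
      ≤ (1 / 2) * ∑ j ∈ Icc 1 (3 * (n / 3)), |p j - q j| := by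
        rw [← sum_Icc_triples]
        gcongr with i hi
        exact htriple i hi
    _ ≤ (1 / 2) * ∑ j ∈ Icc 1 n, |p j - q j| := by
        gcongr
        exact Nat.mul_div_le n 3

theorem log_concave_distance_lower_bound (n : ℕ) (hn : 3 ∣ n) (hn0 : 0 < n)
    (p q : ℕ → ℝ)
    (hp0 : ∀ i ∈ Finset.Icc 1 n, 0 ≤ p i) (hp1 : ∑ i ∈ Finset.Icc 1 n, p i = 1)
    (hpa : ∀ i ∈ Finset.Icc 1 (n / 3), p (3 * i) < p (3 * i - 2))
    (hpb : ∀ i ∈ Finset.Icc 1 (n / 3), (4 / 5) * p (3 * i - 2) < p (3 * i))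
    (hpc : ∀ i ∈ Finset.Icc 1 (n / 3), (3 / 4) * p (3 * i) < p (3 * i - 1))
    (hq0 : ∀ i ∈ Finset.Icc 1 n, 0 ≤ q i) (hq1 : ∑ i ∈ Finset.Icc 1 n, q i = 1)
    -- the support of q is a contiguous interval
    (hqsupp : ∃ a b : ℕ, ∀ i ∈ Finset.Icc 1 n, (0 < q i ↔ a ≤ i ∧ i ≤ b))
    -- log-concavity of q
    (hqlc : ∀ i : ℕ, 2 ≤ i → i ≤ n - 1 → q (i - 1) * q (i + 1) ≤ (q i) ^ 2) :
    (1 / 2) * ∑ i ∈ Finset.Icc 1 (n / 3),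
        max 0 (Real.sqrt (p (3 * i - 2) * p (3 * i)) - p (3 * i - 1)) ≤
      (1 / 2) * ∑ i ∈ Finset.Icc 1 n, |p i - q i| :=
  log_concave_distance_lower_bound_general n p q hpa hpb hpc hqlc
end

section
/- Let a, b, c > 0 be reals with a > c > (4/5)a and b > (3/4)c, and let a', b', c' ≥ 0 satisfy b' ≥ √(a'·c'). Then |a - a'| + |b - b'| + |c - c'| ≥ max(0, √(a·c) - b). -/
/-!
The constraint `√(a'c') ≤ b'` gives `√(ac) - b ≤ |b - b'| + (√(ac) - √(a'c'))`, so it suffices to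
bound the drop of `√(xz)`. If `c' ≤ c/2`, then `|c - c'| ≥ c/2 = 5c/4 - 3c/4 > √(ac) - b`.
Otherwise truncate `a', c'` at `a, c` to `a₂, c₂` and write
`√(ac) - √(a₂c₂) = √c (√a - √a₂) + √a₂ (√c - √c₂)`. Since `(√x + √y)(√x - √y) = x - y`, each term is
at most the corresponding plain difference as soon as `√c ≤ √a + √a₂` and `√a₂ ≤ √c + √c₂`; the
second holds because `a₂ ≤ a < 5c/4 ≤ c + c₂`.
-/

open Real

lemma sqrt_le_sqrt_add_sqrt {x y z : ℝ} (hx : 0 ≤ x) (hy : 0 ≤ y) (h : z ≤ x + y) :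
    √z ≤ √x + √y :=
  sqrt_le_iff.2 ⟨by positivity, by
    nlinarith [sq_sqrt hx, sq_sqrt hy, mul_nonneg (sqrt_nonneg x) (sqrt_nonneg y)]⟩

lemma mul_sqrt_sub_sqrt_le_sub {x y k : ℝ} (hy : 0 ≤ y) (hyx : y ≤ x) (hk : k ≤ √x + √y) :
    k * (√x - √y) ≤ x - y :=
  calc k * (√x - √y) ≤ (√x + √y) * (√x - √y) :=
        mul_le_mul_of_nonneg_right hk (sub_nonneg.2 (sqrt_le_sqrt hyx))
    _ = x - y := by linear_combination sq_sqrt (hy.trans hyx) - sq_sqrt hy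

lemma sqrt_mul_sub_sqrt_mul_le {x z x₂ z₂ : ℝ} (hx₂ : 0 ≤ x₂) (hz₂ : 0 ≤ z₂)
    (hxx : x₂ ≤ x) (hzz : z₂ ≤ z) (hzx : z ≤ x + x₂) (hxz : x₂ ≤ z + z₂) :
    √(x * z) - √(x₂ * z₂) ≤ (x - x₂) + (z - z₂) := by
  have hx : 0 ≤ x := hx₂.trans hxx
  have hz : 0 ≤ z := hz₂.trans hzz
  calc √(x * z) - √(x₂ * z₂) = √z * (√x - √x₂) + √x₂ * (√z - √z₂) := by
        rw [sqrt_mul hx, sqrt_mul hx₂]; ring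
    _ ≤ (x - x₂) + (z - z₂) := add_le_add
        (mul_sqrt_sub_sqrt_le_sub hx₂ hxx (sqrt_le_sqrt_add_sqrt hx hx₂ hzx))
        (mul_sqrt_sub_sqrt_le_sub hz₂ hzz (sqrt_le_sqrt_add_sqrt hz hz₂ hxz))

lemma sub_min_le_abs_sub {α : Type*} [AddGroup α] [LinearOrder α] [AddLeftMono α]
    [AddRightMono α] (x y : α) : x - min y x ≤ |x - y| := by
  rw [abs_sub_comm, ← max_sub_min_eq_abs']
  exact sub_le_sub_right (le_max_right y x) _

theorem single_triple_log_concavity_bound_general (a b c a' b' c' : ℝ)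
    (hc : 0 < c)
    (hac : c < a) (hca : (4 / 5) * a < c) (hbc : (3 / 4) * c < b)
    (ha' : 0 ≤ a')
    (hlc : Real.sqrt (a' * c') ≤ b') :
    max 0 (Real.sqrt (a * c) - b) ≤ |a - a'| + |b - b'| + |c - c'| := by
  refine max_le (by positivity) ?_
  have hb_gap : √(a * c) - b ≤ (√(a * c) - √(a' * c')) + |b - b'| := by
    linarith [neg_abs_le (b - b')]
  rcases le_or_gt c' (c / 2) with hc' | hc'
  · have hsqrt : √(a * c) ≤ 5 / 4 * c := sqrt_le_left (by positivity) |>.2 (by nlinarith)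
    linarith [le_abs_self (c - c'), abs_nonneg (a - a'), abs_nonneg (b - b')]
  · have ha₂ : 0 ≤ min a' a := le_min ha' (hc.trans hac).le
    have hc₂ : c / 2 ≤ min c' c := le_min hc'.le (by linarith)
    have hdrop := sqrt_mul_sub_sqrt_mul_le ha₂ (by linarith) (min_le_right a' a)
      (min_le_right c' c) (by linarith) (by linarith [min_le_right a' a])
    have hmono : √(min a' a * min c' c) ≤ √(a' * c') :=
      sqrt_le_sqrt (mul_le_mul (min_le_left _ _) (min_le_left _ _) (by linarith) ha')
    linarith [sub_min_le_abs_sub a a', sub_min_le_abs_sub c c']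

theorem single_triple_log_concavity_bound (a b c a' b' c' : ℝ)
    (ha : 0 < a) (hb : 0 < b) (hc : 0 < c)
    (hac : c < a) (hca : (4 / 5) * a < c) (hbc : (3 / 4) * c < b)
    (ha' : 0 ≤ a') (hb' : 0 ≤ b') (hc' : 0 ≤ c')
    (hlc : Real.sqrt (a' * c') ≤ b') :
    max 0 (Real.sqrt (a * c) - b) ≤ |a - a'| + |b - b'| + |c - c'| :=
  single_triple_log_concavity_bound_general a b c a' b' c' hc hac hca hbc ha' hlc
end

section
/- Let n be divisible by 6 and let Q_i = (b/n)e^{-(i/n)²} be the discrete Gaussian-like log-concave distribution on {1,...,n} with normalizer b. Let δ_1,...,δ_{n/6} be reals with 0 ≤ δ_i ≤ C_i/n³ for every i, where C_i = n³(Q_{6i-1} - √(Q_{6i}Q_{6i-2})). Define p by p_{6i-4} = Q_{6i-4} + δ_i, p_{6i-1} = Q_{6i-1} - δ_i, and p_j = Q_j otherwise. Then for n sufficiently large, p is a log-concave probability distribution on {1,...,n}: p_j > 0 for all j, ∑_j p_j = 1, and p_j² ≥ p_{j-1}p_{j+1} for all 2 ≤ j ≤ n-1. -/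
/-!
With `u = exp (-1 / n²)` the weights satisfy `Q (j - 1) * Q (j + 1) = (u * Q j) ^ 2`, so the
bound `δ i ≤ C i / n³` says exactly `δ i ≤ (1 - u) * Q (6i - 1)`: every bin moves by at most
`1 - u` times its own weight. Raised and lowered bins are never adjacent, so in a window
`j - 1, j, j + 1` either only the middle moves, and `Q j + ε ≥ u * Q j` keeps
`Q (j - 1) * Q (j + 1) ≤ (Q j + ε) ^ 2`, or only the ends move, and they grow by a factor at
most `2 - u`, which `(u * (2 - u)) ^ 2 ≤ 1` absorbs. In each block of six bins the raise and the
drop cancel, so the total mass is unchanged.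
-/

open Finset Real

theorem add_mul_add_le_sq_add {a b c u x y z : ℝ} (habc : a * c = (u * b) ^ 2)
    (hu0 : 0 ≤ u) (hu1 : u ≤ 1) (ha : 0 ≤ a) (hb : 0 ≤ b) (hc : 0 ≤ c)
    (hx : |x| ≤ (1 - u) * a) (hy : |y| ≤ (1 - u) * b) (hz : |z| ≤ (1 - u) * c)
    (hsep : y = 0 ∨ x = 0 ∧ z = 0) :
    (a + x) * (c + z) ≤ (b + y) ^ 2 := by
  rw [abs_le] at hx hy hz
  rcases hsep with rfl | ⟨rfl, rfl⟩
  · calc (a + x) * (c + z) ≤ ((2 - u) * a) * ((2 - u) * c) := by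
          apply mul_le_mul <;> nlinarith
      _ = (u * (2 - u)) ^ 2 * b ^ 2 := by linear_combination (2 - u) ^ 2 * habc
      _ ≤ 1 * b ^ 2 := by
          gcongr
          rw [sq_le_one_iff₀ (by nlinarith)]
          nlinarith [sq_nonneg (1 - u)]
      _ = (b + 0) ^ 2 := by ring
  · rw [add_zero, add_zero, habc]
    exact pow_le_pow_left₀ (by positivity) (by nlinarith) 2

theorem pos_add_of_abs_le {a u x : ℝ} (hu : 0 < u) (ha : 0 < a) (hx : |x| ≤ (1 - u) * a) :
    0 < a + x := by
  nlinarith [neg_abs_le x, mul_pos hu ha]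

theorem le_one_sub_mul_of_le_sub_sqrt {q q' q'' u d : ℝ} (h : q' * q'' = (u * q) ^ 2)
    (hu : 0 ≤ u) (hq : 0 ≤ q) (hd : d ≤ q - √(q'' * q')) : d ≤ (1 - u) * q := by
  rw [mul_comm, h, sqrt_sq (by positivity)] at hd
  linarith

theorem sum_Icc_one_add {M : Type*} [AddCommMonoid M] (f : ℕ → M) (a : ℕ) :
    ∀ r, ∑ j ∈ Icc 1 (a + r), f j = ∑ j ∈ Icc 1 a, f j + ∑ i ∈ range r, f (a + i + 1)
  | 0 => by simp
  | r + 1 => by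
    rw [← add_assoc, sum_Icc_succ_top (by omega), sum_Icc_one_add f a r, sum_range_succ,
      add_assoc]

/-- Bin `6i - 4` (that is, `j % 6 = 2` with `i = j / 6 + 1`) is raised by `δ i`, and bin `6i - 1`
(`j % 6 = 5`) is lowered by it. -/
def blockPerturbation (δ : ℕ → ℝ) (j : ℕ) : ℝ :=
  if j % 6 = 2 then δ (j / 6 + 1) else if j % 6 = 5 then -δ (j / 6 + 1) else 0

theorem sum_Icc_blockPerturbation (δ : ℕ → ℝ) (m : ℕ) :
    ∑ j ∈ Icc 1 (6 * m), blockPerturbation δ j = 0 := by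
  induction m with
  | zero => simp
  | succ m ih =>
    have hmod : ∀ r < 6,
        (6 * m + r + 1) % 6 = (r + 1) % 6 ∧ (6 * m + r + 1) / 6 = m + (r + 1) / 6 := by
      omega
    rw [mul_add, mul_one, sum_Icc_one_add, ih]
    simp [sum_range_succ, blockPerturbation, hmod]

theorem eq_add_blockPerturbation {m : ℕ} {Q δ p : ℕ → ℝ}
    (hp : ∀ i ∈ Icc 1 m,
      p (6 * i - 4) = Q (6 * i - 4) + δ i ∧ p (6 * i - 1) = Q (6 * i - 1) - δ i)
    (hpQ : ∀ j ∈ Icc 1 (6 * m),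
      (¬ ∃ i ∈ Icc 1 m, j = 6 * i - 4 ∨ j = 6 * i - 1) → p j = Q j)
    {j : ℕ} (hj : j ∈ Icc 1 (6 * m)) : p j = Q j + blockPerturbation δ j := by
  rw [mem_Icc] at hj
  unfold blockPerturbation
  split_ifs with h2 h5
  · have hi : j / 6 + 1 ∈ Icc 1 m := by rw [mem_Icc]; omega
    simpa [show 6 * (j / 6 + 1) - 4 = j by omega] using (hp _ hi).1
  · have hi : j / 6 + 1 ∈ Icc 1 m := by rw [mem_Icc]; omega
    simpa [show 6 * (j / 6 + 1) - 1 = j by omega, sub_eq_add_neg] using (hp _ hi).2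
  · rw [add_zero]
    refine hpQ j (mem_Icc.2 hj) ?_
    rintro ⟨i, -, rfl | rfl⟩ <;> omega

theorem abs_blockPerturbation_le {m : ℕ} {Q δ : ℕ → ℝ} {u : ℝ} (hu : u ≤ 1)
    (hQ0 : ∀ j, 0 ≤ Q j) (hQ : Antitone Q)
    (hδ : ∀ i ∈ Icc 1 m, 0 ≤ δ i ∧ δ i ≤ (1 - u) * Q (6 * i - 1))
    {j : ℕ} (hj : j ∈ Icc 1 (6 * m)) : |blockPerturbation δ j| ≤ (1 - u) * Q j := by
  rw [mem_Icc] at hj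
  unfold blockPerturbation
  split_ifs with h2 h5
  · obtain ⟨hδ0, hδ1⟩ := hδ (j / 6 + 1) (by rw [mem_Icc]; omega)
    rw [abs_of_nonneg hδ0]
    exact hδ1.trans (mul_le_mul_of_nonneg_left (hQ (by omega)) (by linarith))
  · obtain ⟨hδ0, hδ1⟩ := hδ (j / 6 + 1) (by rw [mem_Icc]; omega)
    rw [abs_neg, abs_of_nonneg hδ0]
    rwa [show 6 * (j / 6 + 1) - 1 = j by omega] at hδ1
  · simpa using mul_nonneg (sub_nonneg.2 hu) (hQ0 j)

theorem blockPerturbation_eq_zero_or (δ : ℕ → ℝ) {j : ℕ} (hj : 1 ≤ j) :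
    blockPerturbation δ j = 0 ∨
      blockPerturbation δ (j - 1) = 0 ∧ blockPerturbation δ (j + 1) = 0 := by
  by_cases h : j % 6 = 2 ∨ j % 6 = 5
  · right
    simp [blockPerturbation, show (j - 1) % 6 ≠ 2 ∧ (j - 1) % 6 ≠ 5 by omega,
      show (j + 1) % 6 ≠ 2 ∧ (j + 1) % 6 ≠ 5 by omega]
  · left
    simp [blockPerturbation, show j % 6 ≠ 2 ∧ j % 6 ≠ 5 by omega]

theorem add_blockPerturbation_mul_le_sq {m : ℕ} {Q δ : ℕ → ℝ} {u : ℝ}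
    (hu0 : 0 ≤ u) (hu1 : u ≤ 1)
    (hQ0 : ∀ j, 0 ≤ Q j) (hQ : Antitone Q)
    (hratio : ∀ j, 1 ≤ j → Q (j - 1) * Q (j + 1) = (u * Q j) ^ 2)
    (hδ : ∀ i ∈ Icc 1 m, 0 ≤ δ i ∧ δ i ≤ (1 - u) * Q (6 * i - 1))
    {j : ℕ} (h2 : 2 ≤ j) (hj : j ≤ 6 * m - 1) :
    (Q (j - 1) + blockPerturbation δ (j - 1)) * (Q (j + 1) + blockPerturbation δ (j + 1)) ≤
      (Q j + blockPerturbation δ j) ^ 2 := by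
  have hbound : ∀ k, 1 ≤ k → k ≤ 6 * m → |blockPerturbation δ k| ≤ (1 - u) * Q k :=
    fun k hk1 hk2 ↦ abs_blockPerturbation_le hu1 hQ0 hQ hδ (mem_Icc.2 ⟨hk1, hk2⟩)
  exact add_mul_add_le_sq_add (hratio j (by omega)) hu0 hu1 (hQ0 _) (hQ0 _) (hQ0 _)
    (hbound _ (by omega) (by omega)) (hbound _ (by omega) (by omega))
    (hbound _ (by omega) (by omega)) (blockPerturbation_eq_zero_or δ (by omega))

section Gaussian

variable {n : ℕ} {b : ℝ} {Q : ℕ → ℝ}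

theorem antitone_of_eq_mul_exp (hQ : ∀ i, Q i = b / n * exp (-((i : ℝ) / n) ^ 2))
    (hb : 0 ≤ b) : Antitone Q := by
  intro i j hij
  rw [hQ, hQ]
  gcongr

theorem mul_eq_sq_of_eq_mul_exp (hQ : ∀ i, Q i = b / n * exp (-((i : ℝ) / n) ^ 2))
    (hn : n ≠ 0) {j : ℕ} (hj : 1 ≤ j) :
    Q (j - 1) * Q (j + 1) = (exp (-1 / (n : ℝ) ^ 2) * Q j) ^ 2 := by
  have hn' : (n : ℝ) ≠ 0 := Nat.cast_ne_zero.2 hn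
  have hexp : exp (-(((j : ℝ) - 1) / n) ^ 2) * exp (-(((j : ℝ) + 1) / n) ^ 2) =
      (exp (-1 / (n : ℝ) ^ 2) * exp (-((j : ℝ) / n) ^ 2)) ^ 2 := by
    rw [← exp_add, ← exp_add, ← exp_nat_mul]
    congr 1
    field_simp
    ring
  rw [hQ, hQ, hQ, Nat.cast_sub hj, Nat.cast_add, Nat.cast_one]
  linear_combination (b / n) ^ 2 * hexp

theorem sum_exp_neg_sq_pos (hn : n ≠ 0) : 0 < ∑ j ∈ Icc 1 n, exp (-((j : ℝ) / n) ^ 2) :=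
  sum_pos (fun _ _ ↦ exp_pos _) ⟨1, mem_Icc.2 ⟨le_rfl, Nat.one_le_iff_ne_zero.2 hn⟩⟩

theorem sum_eq_one_of_eq_mul_exp (hQ : ∀ i, Q i = b / n * exp (-((i : ℝ) / n) ^ 2))
    (hn : n ≠ 0) (hb : b = n / ∑ j ∈ Icc 1 n, exp (-((j : ℝ) / n) ^ 2)) :
    ∑ j ∈ Icc 1 n, Q j = 1 := by
  rw [sum_congr rfl fun j _ ↦ hQ j, ← mul_sum, hb, div_right_comm,
    div_self (Nat.cast_ne_zero.2 hn), one_div_mul_cancel (sum_exp_neg_sq_pos hn).ne']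

end Gaussian

theorem perturbed_gaussian_log_concave :
    ∃ N : ℕ, ∀ n : ℕ, N ≤ n → 6 ∣ n →
    ∀ b : ℝ, b = (n : ℝ) / ∑ j ∈ Finset.Icc 1 n, Real.exp (-((j : ℝ) / n) ^ 2) →
    ∀ Q : ℕ → ℝ, (∀ i, Q i = (b / n) * Real.exp (-((i : ℝ) / n) ^ 2)) →
    ∀ C : ℕ → ℝ,
      (∀ i, C i = (n : ℝ) ^ 3 * (Q (6 * i - 1) - Real.sqrt (Q (6 * i) * Q (6 * i - 2)))) →
    ∀ δ : ℕ → ℝ, (∀ i ∈ Finset.Icc 1 (n / 6), 0 ≤ δ i ∧ δ i ≤ C i / (n : ℝ) ^ 3) →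
    ∀ p : ℕ → ℝ,
      (∀ i ∈ Finset.Icc 1 (n / 6),
        p (6 * i - 4) = Q (6 * i - 4) + δ i ∧ p (6 * i - 1) = Q (6 * i - 1) - δ i) →
      (∀ j ∈ Finset.Icc 1 n,
        (¬ ∃ i ∈ Finset.Icc 1 (n / 6), j = 6 * i - 4 ∨ j = 6 * i - 1) → p j = Q j) →
    (∀ j ∈ Finset.Icc 1 n, 0 < p j) ∧
    (∑ j ∈ Finset.Icc 1 n, p j = 1) ∧
    (∀ j : ℕ, 2 ≤ j → j ≤ n - 1 → p (j - 1) * p (j + 1) ≤ (p j) ^ 2) := by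
  refine ⟨1, fun n hn hdvd b hb Q hQ C hC δ hδ p hp hpQ ↦ ?_⟩
  obtain ⟨m, rfl⟩ := hdvd
  rw [Nat.mul_div_cancel_left m (by norm_num)] at hδ hp hpQ
  have hn0 : 6 * m ≠ 0 := by omega
  set u := exp (-1 / ((6 * m : ℕ) : ℝ) ^ 2)
  have hu0 : 0 < u := exp_pos _
  have hu1 : u ≤ 1 := exp_le_one_iff.2 (by rw [neg_div]; exact neg_nonpos.2 (by positivity))
  have hb0 : 0 < b := hb ▸ div_pos (by positivity) (sum_exp_neg_sq_pos hn0)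
  have hQpos : ∀ j, 0 < Q j := fun j ↦ by rw [hQ]; positivity
  have hQ0 : ∀ j, 0 ≤ Q j := fun j ↦ (hQpos j).le
  have hQanti := antitone_of_eq_mul_exp hQ hb0.le
  have hratio := fun j ↦ mul_eq_sq_of_eq_mul_exp hQ hn0 (j := j)
  have hδ' : ∀ i ∈ Icc 1 m, 0 ≤ δ i ∧ δ i ≤ (1 - u) * Q (6 * i - 1) := by
    intro i hi
    obtain ⟨hδ0, hδC⟩ := hδ i hi
    rw [mem_Icc] at hi
    rw [hC, mul_div_cancel_left₀ _ (by positivity)] at hδC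
    have hratio' := hratio (6 * i - 1) (by omega)
    rw [show 6 * i - 1 - 1 = 6 * i - 2 by omega, show 6 * i - 1 + 1 = 6 * i by omega] at hratio'
    exact ⟨hδ0, le_one_sub_mul_of_le_sub_sqrt hratio' hu0.le (hQ0 _) hδC⟩
  have hpQ' := fun j (hj : j ∈ Icc 1 (6 * m)) ↦ eq_add_blockPerturbation hp hpQ hj
  refine ⟨fun j hj ↦ ?_, ?_, fun j h2 hj ↦ ?_⟩
  · rw [hpQ' j hj]
    exact pos_add_of_abs_le hu0 (hQpos j) (abs_blockPerturbation_le hu1 hQ0 hQanti hδ' hj)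
  · rw [sum_congr rfl hpQ', sum_add_distrib, sum_Icc_blockPerturbation, add_zero]
    exact sum_eq_one_of_eq_mul_exp hQ hn0 hb
  · rw [hpQ' j (by rw [mem_Icc]; omega), hpQ' (j - 1) (by rw [mem_Icc]; omega),
      hpQ' (j + 1) (by rw [mem_Icc]; omega)]
    exact add_blockPerturbation_mul_le_sq hu0.le hu1 hQ0 hQanti hratio hδ' h2 hj
end
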